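/- arXiv:0912.1819 — 5 statements merged into one kernel-verified Lean document; each statement's English description precedes it below -/
import Mathlib

section
/- For every complex symmetric n×n matrix S there exists an invertible upper-triangular complex matrix B and a partial involution matrix π such that S = Bᵗ·π·B. -/
/-!
Induct on a set `s` of indices outside of which the rows of `T` vanish. Let `p` be the first
nonzero row of `T`. If `T p p = r²` is nonzero, then `T - w wᵀ` with `w = T p / r` vanishes on
row `p`. If `T p p = 0` and `q` is the first nonzero entry of row `p`, then `T - (x yᵀ + y xᵀ)`
with `y = T p` and a suitable `x` vanishes on rows `p` and `q`. Write the remainder as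
`B'ᵀ π' B'` by induction. As `π'` vanishes on the pivot rows, replacing those rows of `B'` by
`w` (resp. `x`, `y`) does not change `B'ᵀ π' B'` and adds `w wᵀ` (resp. `x yᵀ + y xᵀ`) when
`π'` is extended by `e_pp` (resp. `e_pq + e_qp`). The new rows start at the pivot position,
which keeps `B` upper triangular with nonzero diagonal.
-/

open Matrix

/-- A partial permutation matrix: a 0-1 matrix with at most one 1 in each row
and each column. -/
def IsPartialPermMatrix {n : ℕ} (X : Matrix (Fin n) (Fin n) ℂ) : Prop :=
  (∀ i j, X i j = 0 ∨ X i j = 1) ∧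
    (∀ i, {j | X i j = 1}.Subsingleton) ∧
    (∀ j, {i | X i j = 1}.Subsingleton)

/-- A partial involution matrix: a symmetric partial permutation matrix. -/
def IsPartialInvolution {n : ℕ} (X : Matrix (Fin n) (Fin n) ℂ) : Prop :=
  IsPartialPermMatrix X ∧ X.IsSymm

namespace Matrix

variable {ι R : Type*}

section Congruence

variable [Fintype ι] [DecidableEq ι] [CommSemiring R]

theorem transpose_mul_single_one_mul (B : Matrix ι ι R) (p q : ι) :
    Bᵀ * single p q 1 * B = vecMulVec (B p) (B q) := by
  ext k l
  simp [mul_apply, single_apply, vecMulVec_apply, ite_and, Finset.sum_ite_eq, ite_mul]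

theorem updateRow_transpose_mul_mul_updateRow (B π : Matrix ι ι R) {p : ι}
    (w : ι → R) (hrow : π p = 0) (hcol : ∀ i, π i p = 0) :
    (B.updateRow p w)ᵀ * π * B.updateRow p w = Bᵀ * π * B := by
  have hleft : (B.updateRow p w)ᵀ * π = Bᵀ * π := by
    ext k j
    refine Finset.sum_congr rfl fun i _ => ?_
    rcases eq_or_ne i p with rfl | hi
    · simp [hrow]
    · simp [updateRow_ne hi]
  have hright : π * B.updateRow p w = π * B := by
    ext k j
    refine Finset.sum_congr rfl fun i _ => ?_
    rcases eq_or_ne i p with rfl | hi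
    · simp [hcol]
    · simp [updateRow_ne hi]
  rw [hleft, Matrix.mul_assoc, hright, Matrix.mul_assoc]

end Congruence

section Borel

variable [LinearOrder ι] [Field R]

def IsBorel (B : Matrix ι ι R) : Prop :=
  B.IsUpperTriangular ∧ ∀ i, B i i ≠ 0

theorem isBorel_one [DecidableEq ι] : (1 : Matrix ι ι R).IsBorel :=
  ⟨fun _ _ h => one_apply_ne h.ne', fun _ => by simp⟩

theorem IsBorel.updateRow [DecidableEq ι] {B : Matrix ι ι R} (hB : B.IsBorel) {p : ι}
    {w : ι → R} (hw : ∀ j < p, w j = 0) (hwp : w p ≠ 0) : (B.updateRow p w).IsBorel := by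
  refine ⟨fun i j hij => ?_, fun i => ?_⟩ <;> rcases eq_or_ne i p with rfl | hi
  · simpa using hw j hij
  · simpa [updateRow_ne hi] using hB.1 hij
  · simpa using hwp
  · simpa [updateRow_ne hi] using hB.2 i

theorem IsBorel.isUnit_det [Fintype ι] [DecidableEq ι] {B : Matrix ι ι R} (hB : B.IsBorel) :
    IsUnit B.det := by
  rw [det_of_isUpperTriangular hB.1, isUnit_iff_ne_zero]
  exact Finset.prod_ne_zero_iff.mpr fun i _ => hB.2 i

end Borel

section Pivot

variable [Field R] {T : Matrix ι ι R}

theorem sub_vecMulVec_diagPivot_row {p : ι} {r : R} (hr : r * r = T p p) (hr0 : r ≠ 0) :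
    (T - vecMulVec (r⁻¹ • T p) (r⁻¹ • T p)) p = 0 := by
  funext j
  simp only [sub_apply, vecMulVec_apply, Pi.smul_apply, smul_eq_mul, Pi.zero_apply, ← hr]
  field_simp
  ring

/-- Solving `x yᵀ + y xᵀ = T` on rows `p` and `q` for `x`, where `y = T p` and `T p p = 0`;
the `2` comes from the entry `(q, q)`, which receives both terms. -/
def offDiagPivot (T : Matrix ι ι R) (p q : ι) : ι → R :=
  (T p q)⁻¹ • (T q - (T q q / (2 * T p q)) • T p)

theorem sub_vecMulVec_offDiagPivot_rows (hT : T.IsSymm) {p q : ι} (h2 : (2 : R) ≠ 0)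
    (hpp : T p p = 0) (hpq : T p q ≠ 0) :
    let x := offDiagPivot T p q
    (T - (vecMulVec x (T p) + vecMulVec (T p) x)) p = 0 ∧
      (T - (vecMulVec x (T p) + vecMulVec (T p) x)) q = 0 := by
  have hqp : T q p = T p q := hT.apply p q
  constructor <;> funext j <;>
    simp only [offDiagPivot, sub_apply, add_apply, vecMulVec_apply, Pi.smul_apply, Pi.sub_apply,
      smul_eq_mul, Pi.zero_apply, hpp, hqp] <;>
    field_simp <;> ring

end Pivot

end Matrix

section PartialInvolution

variable {n : ℕ}

theorem IsPartialInvolution.of_rows {X : Matrix (Fin n) (Fin n) ℂ}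
    (h01 : ∀ i j, X i j = 0 ∨ X i j = 1) (hrow : ∀ i, {j | X i j = 1}.Subsingleton)
    (hX : X.IsSymm) : IsPartialInvolution X :=
  ⟨⟨h01, hrow, fun j => by simpa only [hX.apply] using hrow j⟩, hX⟩

theorem isPartialInvolution_zero : IsPartialInvolution (0 : Matrix (Fin n) (Fin n) ℂ) :=
  .of_rows (fun _ _ => .inl rfl) (fun _ _ h => by simp at h) (by simp [IsSymm])

theorem isPartialInvolution_single (p : Fin n) : IsPartialInvolution (single p p (1 : ℂ)) := by
  refine .of_rows (fun i j => ?_) (fun i j hj k hk => ?_) ?_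
  · rw [single_apply]
    split_ifs <;> simp
  · simp only [Set.mem_ofPred_eq, single_apply] at hj hk
    grind
  · simp [IsSymm, transpose_single]

theorem isPartialInvolution_single_add_single {p q : Fin n} (hpq : p ≠ q) :
    IsPartialInvolution (single p q (1 : ℂ) + single q p 1) := by
  refine .of_rows (fun i j => ?_) (fun i j hj k hk => ?_) ?_
  · simp only [Matrix.add_apply, single_apply]
    grind
  · simp only [Set.mem_ofPred_eq, Matrix.add_apply, single_apply] at hj hk
    grind
  · simp [IsSymm, transpose_single, add_comm]

theorem IsPartialInvolution.add {X Y : Matrix (Fin n) (Fin n) ℂ} (hX : IsPartialInvolution X)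
    (hY : IsPartialInvolution Y) (h : ∀ i, X i = 0 ∨ Y i = 0) : IsPartialInvolution (X + Y) := by
  have hrow : ∀ i, (X + Y) i = X i ∨ (X + Y) i = Y i := fun i => by
    rcases h i with h | h
    · exact .inr (by funext j; simp [congrFun h j])
    · exact .inl (by funext j; simp [congrFun h j])
  refine .of_rows (fun i j => ?_) (fun i => ?_) (hX.2.add hY.2)
  · rcases hrow i with e | e <;> rw [e]
    exacts [hX.1.1 i j, hY.1.1 i j]
  · rcases hrow i with e | e <;> simp only [e]
    exacts [hX.1.2.1 i, hY.1.2.1 i]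

end PartialInvolution

section NormalForm

variable {n : ℕ}

def HasBorelNormalFormOn (s : Finset (Fin n)) (T : Matrix (Fin n) (Fin n) ℂ) : Prop :=
  ∃ B π : Matrix (Fin n) (Fin n) ℂ, B.IsBorel ∧ IsPartialInvolution π ∧ (∀ i ∉ s, π i = 0) ∧
    T = Bᵀ * π * B

theorem hasBorelNormalFormOn_of_diagPivot {s : Finset (Fin n)} {T : Matrix (Fin n) (Fin n) ℂ}
    (hT : T.IsSymm) (hs : ∀ i ∉ s, T i = 0) {p : Fin n} (hlow : ∀ i < p, T i = 0)
    (hpp : T p p ≠ 0)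
    (ih : ∀ T' : Matrix (Fin n) (Fin n) ℂ, T'.IsSymm → (∀ i ∉ s.erase p, T' i = 0) →
      HasBorelNormalFormOn (s.erase p) T') :
    HasBorelNormalFormOn s T := by
  obtain ⟨r, hr⟩ := IsAlgClosed.exists_eq_mul_self (T p p)
  have hr0 : r ≠ 0 := by rintro rfl; simp_all
  have hps : p ∈ s := by_contra fun h => hpp (by simp [hs p h])
  set w := r⁻¹ • T p
  have hw : ∀ i, T i = 0 → w i = 0 := fun i hi => by simp [w, ← hT.apply p i, hi]
  obtain ⟨B, π, hB, hπ, hπs, hT'⟩ := ih (T - vecMulVec w w)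
    (hT.sub (transpose_vecMulVec w w)) fun i hi => by
      rcases eq_or_ne i p with rfl | hip
      · exact sub_vecMulVec_diagPivot_row hr.symm hr0
      · have hTi := hs i fun h => hi (Finset.mem_erase.mpr ⟨hip, h⟩)
        funext j
        simp [vecMulVec_apply, hTi, hw i hTi]
  have hπp : π p = 0 := hπs p (Finset.notMem_erase p s)
  have hwp : w p = r := by
    simp only [w, Pi.smul_apply, smul_eq_mul, hr]
    field_simp
  refine ⟨B.updateRow p w, π + single p p 1,
    hB.updateRow (fun j hj => hw j (hlow j hj)) (hwp ▸ hr0),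
    hπ.add (isPartialInvolution_single p) fun i => ?_, fun i hi => ?_, ?_⟩
  · rcases eq_or_ne i p with rfl | hip
    · exact .inl hπp
    · exact .inr (by funext j; simp [hip.symm])
  · have hip : i ≠ p := by rintro rfl; exact hi hps
    funext j
    simp [hπs i fun h => hi (Finset.mem_of_mem_erase h), hip.symm]
  · rw [Matrix.mul_add, Matrix.add_mul, updateRow_transpose_mul_mul_updateRow _ _ _ hπp
      fun i => by rw [hπ.2.apply p i, hπp, Pi.zero_apply], transpose_mul_single_one_mul,
      updateRow_self, ← hT', sub_add_cancel]

theorem hasBorelNormalFormOn_of_offDiagPivot {s : Finset (Fin n)} {T : Matrix (Fin n) (Fin n) ℂ}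
    (hT : T.IsSymm) (hs : ∀ i ∉ s, T i = 0) {p q : Fin n} (hlow : ∀ i < p, T i = 0)
    (hpp : T p p = 0) (hpq : T p q ≠ 0) (hlowq : ∀ j < q, T p j = 0)
    (ih : ∀ T' : Matrix (Fin n) (Fin n) ℂ, T'.IsSymm → (∀ i ∉ (s.erase p).erase q, T' i = 0) →
      HasBorelNormalFormOn ((s.erase p).erase q) T') :
    HasBorelNormalFormOn s T := by
  have hqp : q ≠ p := by rintro rfl; exact hpq hpp
  have hps : p ∈ s := by_contra fun h => hpq (by simp [hs p h])
  have hqs : q ∈ s := by_contra fun h => hpq (by rw [hT.apply q p, hs q h, Pi.zero_apply])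
  set x := offDiagPivot T p q
  have hx : ∀ i, T i = 0 → x i = 0 := fun i hi => by
    simp only [x, offDiagPivot, Pi.smul_apply, Pi.sub_apply, smul_eq_mul, ← hT.apply p i,
      ← hT.apply q i, congrFun hi, Pi.zero_apply]
    ring
  have hTp : ∀ i, T i = 0 → T p i = 0 := fun i hi => by simp [← hT.apply p i, hi]
  obtain ⟨B, π, hB, hπ, hπs, hT'⟩ := ih (T - (vecMulVec x (T p) + vecMulVec (T p) x))
    (hT.sub (by rw [IsSymm, transpose_add, transpose_vecMulVec, transpose_vecMulVec, add_comm]))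
    fun i hi => by
      obtain ⟨hrp, hrq⟩ := sub_vecMulVec_offDiagPivot_rows hT two_ne_zero hpp hpq
      rcases eq_or_ne i p with rfl | hip
      · exact hrp
      rcases eq_or_ne i q with rfl | hiq
      · exact hrq
      have hTi := hs i fun h => hi (by simp [hip, hiq, h])
      funext j
      simp [vecMulVec_apply, hTi, hx i hTi, hTp i hTi]
  have hπp : π p = 0 := hπs p (by simp)
  have hπq : π q = 0 := hπs q (by simp)
  have hcol : ∀ k, π k = 0 → ∀ i, π i k = 0 := fun k hk i => by
    rw [hπ.2.apply k i, hk, Pi.zero_apply]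
  have hxp : x p = 1 := by
    simp only [x, offDiagPivot, Pi.smul_apply, Pi.sub_apply, smul_eq_mul, hpp, hT.apply p q]
    field_simp
    ring
  refine ⟨(B.updateRow p x).updateRow q (T p), π + (single p q 1 + single q p 1),
    (hB.updateRow (fun j hj => hx j (hlow j hj)) (hxp ▸ one_ne_zero)).updateRow hlowq hpq,
    hπ.add (isPartialInvolution_single_add_single hqp.symm) fun i => ?_, fun i hi => ?_, ?_⟩
  · rcases eq_or_ne i p with rfl | hip
    · exact .inl hπp
    rcases eq_or_ne i q with rfl | hiq
    · exact .inl hπq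
    exact .inr (by funext j; simp [hip.symm, hiq.symm])
  · have hip : i ≠ p := by rintro rfl; exact hi hps
    have hiq : i ≠ q := by rintro rfl; exact hi hqs
    funext j
    simp [hπs i fun h => hi (Finset.mem_of_mem_erase (Finset.mem_of_mem_erase h)), hip.symm,
      hiq.symm]
  · rw [Matrix.mul_add, Matrix.add_mul,
      updateRow_transpose_mul_mul_updateRow _ _ _ hπq (hcol q hπq),
      updateRow_transpose_mul_mul_updateRow _ _ _ hπp (hcol p hπp), Matrix.mul_add, Matrix.add_mul,
      transpose_mul_single_one_mul, transpose_mul_single_one_mul, updateRow_self,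
      updateRow_ne hqp.symm, updateRow_self, ← hT', sub_add_cancel]

theorem hasBorelNormalFormOn (s : Finset (Fin n)) (T : Matrix (Fin n) (Fin n) ℂ) (hT : T.IsSymm)
    (hs : ∀ i ∉ s, T i = 0) : HasBorelNormalFormOn s T := by
  induction s using Finset.strongInduction generalizing T with
  | H s ih =>
  rcases eq_or_ne T 0 with rfl | hT0
  · exact ⟨1, 0, isBorel_one, isPartialInvolution_zero, fun _ _ => rfl, by simp⟩
  obtain ⟨p, hp, hpmin⟩ := wellFounded_lt.has_min {i | T i ≠ 0} (Function.ne_iff.mp hT0)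
  have hlow : ∀ i < p, T i = 0 := fun i hi => by_contra fun h => hpmin i h hi
  have hps : p ∈ s := by_contra fun h => hp (hs p h)
  rcases ne_or_eq (T p p) 0 with hpp | hpp
  · exact hasBorelNormalFormOn_of_diagPivot hT hs hlow hpp
      (ih _ (Finset.erase_ssubset hps))
  · obtain ⟨q, hq, hqmin⟩ := wellFounded_lt.has_min {j | T p j ≠ 0} (Function.ne_iff.mp hp)
    exact hasBorelNormalFormOn_of_offDiagPivot hT hs hlow hpp hq
      (fun j hj => by_contra fun h => hqmin j h hj)
      (ih _ ((Finset.erase_subset _ _).trans_ssubset (Finset.erase_ssubset hps)))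

end NormalForm

theorem stmt7 {n : ℕ} (S : Matrix (Fin n) (Fin n) ℂ) (hS : S.IsSymm) :
    ∃ (B π : Matrix (Fin n) (Fin n) ℂ),
      IsUnit B.det ∧ (∀ i j : Fin n, j < i → B i j = 0) ∧
      IsPartialInvolution π ∧ S = Bᵀ * π * B := by
  obtain ⟨B, π, hB, hπ, -, hSB⟩ := hasBorelNormalFormOn Finset.univ S hS fun i hi =>
    absurd (Finset.mem_univ i) hi
  exact ⟨B, π, hB.isUnit_det, fun _ _ h => hB.1 h, hπ, hSB⟩
end

section
/- If π and σ are partial involution matrices, B is an invertible upper-triangular complex matrix, and Bᵗ·π·B = σ, then π = σ. Consequently, distinct partial involutions lie in distinct congruence B-orbits. -/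
/-!
An upper-triangular `B` maps the span of the first `a` coordinate vectors into itself, so the
upper-left `a × b` corner of `Bᵀ M B` is the corresponding corner of `M` multiplied on both sides
by other matrices. Since `B⁻¹` is again upper triangular, conjugation by `B` therefore preserves
the rank of every corner. The rank of a corner of a partial permutation matrix is the number of
ones in it, i.e. the sum of its entries, and a matrix is determined by its corner sums through
inclusion–exclusion.
-/

open Matrix

section Corner

variable {R : Type*} [CommRing R] {n : ℕ}

def prefixProj (a : ℕ) : Matrix (Fin n) (Fin n) R :=
  diagonal fun k => if (k : ℕ) < a then 1 else 0

def corner (M : Matrix (Fin n) (Fin n) R) (a b : ℕ) : Matrix (Fin n) (Fin n) R :=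
  prefixProj a * M * prefixProj b

lemma corner_apply (M : Matrix (Fin n) (Fin n) R) (a b : ℕ) (k l : Fin n) :
    corner M a b k l = if (k : ℕ) < a ∧ (l : ℕ) < b then M k l else 0 := by
  simp only [corner, prefixProj, diagonal_mul, mul_diagonal, ite_mul, one_mul, zero_mul,
    ite_and]
  split_ifs <;> simp

lemma corner_eq_mul_prefixProj {B : Matrix (Fin n) (Fin n) R} (hB : B.BlockTriangular id)
    (a : ℕ) : corner B a a = B * prefixProj a := by
  ext k l
  rw [corner_apply, prefixProj, mul_diagonal]
  by_cases hl : (l : ℕ) < a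
  · by_cases hk : (k : ℕ) < a
    · simp [hk, hl]
    · simp [hk, hl, hB (show l < k by omega)]
  · simp [hl]

lemma corner_transpose_eq_prefixProj_mul {B : Matrix (Fin n) (Fin n) R}
    (hB : B.BlockTriangular id) (a : ℕ) : corner Bᵀ a a = prefixProj a * Bᵀ := by
  have hP : (prefixProj a : Matrix (Fin n) (Fin n) R)ᵀ = prefixProj a := diagonal_transpose _
  simpa only [corner, transpose_mul, hP, Matrix.mul_assoc] using
    congrArg transpose (corner_eq_mul_prefixProj hB a)

lemma rank_corner_conj_le [Nontrivial R] {B : Matrix (Fin n) (Fin n) R}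
    (hB : B.BlockTriangular id) (M : Matrix (Fin n) (Fin n) R) (a b : ℕ) :
    (corner (Bᵀ * M * B) a b).rank ≤ (corner M a b).rank := by
  have hfactor : corner (Bᵀ * M * B) a b =
      prefixProj a * Bᵀ * corner M a b * (B * prefixProj b) :=
    calc corner (Bᵀ * M * B) a b = corner Bᵀ a a * M * corner B b b := by
          rw [corner_eq_mul_prefixProj hB, corner_transpose_eq_prefixProj_mul hB]
          simp only [corner, Matrix.mul_assoc]
      _ = _ := by simp only [corner, Matrix.mul_assoc]
  rw [hfactor]
  exact (rank_mul_le_left _ _).trans (rank_mul_le_right _ _)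

lemma rank_corner_conj [Nontrivial R] {B : Matrix (Fin n) (Fin n) R}
    (hB : B.BlockTriangular id) (hdet : IsUnit B.det) (M : Matrix (Fin n) (Fin n) R) (a b : ℕ) :
    (corner (Bᵀ * M * B) a b).rank = (corner M a b).rank := by
  have := B.invertibleOfIsUnitDet hdet
  have hconj : B⁻¹ᵀ * (Bᵀ * M * B) * B⁻¹ = M := by
    simp [transpose_nonsing_inv, ← Matrix.mul_assoc]
  refine (rank_corner_conj_le hB M a b).antisymm ?_
  calc (corner M a b).rank = (corner (B⁻¹ᵀ * (Bᵀ * M * B) * B⁻¹) a b).rank := by rw [hconj]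
    _ ≤ _ := rank_corner_conj_le (blockTriangular_inv_of_blockTriangular hB) _ a b

def cornerSum (M : Matrix (Fin n) (Fin n) R) (a b : ℕ) : R :=
  ∑ k, ∑ l, corner M a b k l

lemma apply_eq_cornerSum (M : Matrix (Fin n) (Fin n) R) (i j : Fin n) :
    M i j = cornerSum M (i + 1) (j + 1) - cornerSum M i (j + 1) - cornerSum M (i + 1) j
      + cornerSum M i j := by
  simp only [cornerSum, corner_apply, ← Finset.sum_sub_distrib, ← Finset.sum_add_distrib]
  have hterm : ∀ k l : Fin n, ((if (k : ℕ) < i + 1 ∧ (l : ℕ) < j + 1 then M k l else 0) -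
      (if (k : ℕ) < i ∧ (l : ℕ) < j + 1 then M k l else 0) -
      (if (k : ℕ) < i + 1 ∧ (l : ℕ) < j then M k l else 0) +
      if (k : ℕ) < i ∧ (l : ℕ) < j then M k l else 0) = if k = i ∧ l = j then M k l else 0 := by
    intro k l
    simp only [Fin.ext_iff]
    split_ifs <;> first | omega | ring
  rw [Finset.sum_congr rfl fun k _ => Finset.sum_congr rfl fun l _ => hterm k l]
  simp only [ite_and, Finset.sum_ite_irrel, Finset.sum_const_zero, Finset.sum_ite_eq',
    Finset.mem_univ, if_true]

lemma eq_of_cornerSum_eq {X Y : Matrix (Fin n) (Fin n) R}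
    (h : ∀ a b, cornerSum X a b = cornerSum Y a b) : X = Y := by
  ext i j
  rw [apply_eq_cornerSum X, apply_eq_cornerSum Y, h, h, h, h]

end Corner

section PartialPerm

variable {n : ℕ} {X : Matrix (Fin n) (Fin n) ℂ}

lemma isPartialPermMatrix_corner (hX : IsPartialPermMatrix X) (a b : ℕ) :
    IsPartialPermMatrix (corner X a b) := by
  have hsub : ∀ k l, corner X a b k l = 1 → X k l = 1 := by
    intro k l h
    rw [corner_apply] at h
    split_ifs at h
    exacts [h, absurd h zero_ne_one]
  refine ⟨fun k l => ?_, fun k => (hX.2.1 k).anti fun l => hsub k l,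
    fun l => (hX.2.2 l).anti fun k => hsub k l⟩
  rw [corner_apply]
  split_ifs
  exacts [hX.1 k l, Or.inl rfl]

lemma IsPartialPermMatrix.sum_col_eq_zero_or_one (hX : IsPartialPermMatrix X) (l : Fin n) :
    ∑ k, X k l = 0 ∨ ∑ k, X k l = 1 := by
  by_cases h : ∃ k, X k l = 1
  · obtain ⟨k, hk⟩ := h
    right
    rw [Finset.sum_eq_single k, hk]
    · exact fun k' _ hk' => (hX.1 k' l).resolve_right fun h' => hk' (hX.2.2 l h' hk)
    · simp
  · push Not at h
    exact Or.inl (Finset.sum_eq_zero fun k _ => (hX.1 k l).resolve_right (h k))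

lemma IsPartialPermMatrix.conjTranspose_mul_self (hX : IsPartialPermMatrix X) :
    Xᴴ * X = diagonal fun l => ∑ k, X k l := by
  ext l l'
  simp only [mul_apply, conjTranspose_apply, diagonal_apply]
  split_ifs with hll
  · subst hll
    refine Finset.sum_congr rfl fun k _ => ?_
    rcases hX.1 k l with h | h <;> simp [h]
  · refine Finset.sum_eq_zero fun k _ => ?_
    rcases hX.1 k l with h | h
    · simp [h]
    rcases hX.1 k l' with h' | h'
    · simp [h']
    · exact absurd (hX.2.1 k h h') hll

open scoped ComplexOrder in
lemma IsPartialPermMatrix.rank_eq_sum (hX : IsPartialPermMatrix X) :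
    (X.rank : ℂ) = ∑ k, ∑ l, X k l := by
  classical
  rw [← rank_conjTranspose_mul_self, hX.conjTranspose_mul_self, rank_diagonal,
    Fintype.card_subtype, Finset.natCast_card_filter]
  refine (Finset.sum_congr rfl fun l _ => ?_).trans Finset.sum_comm
  rcases hX.sum_col_eq_zero_or_one l with h | h <;> simp [h]

lemma IsPartialPermMatrix.cornerSum_eq_rank (hX : IsPartialPermMatrix X) (a b : ℕ) :
    cornerSum X a b = (corner X a b).rank :=
  ((isPartialPermMatrix_corner hX a b).rank_eq_sum).symm

theorem IsPartialPermMatrix.eq_of_transpose_mul_mul_eq {Y B : Matrix (Fin n) (Fin n) ℂ}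
    (hX : IsPartialPermMatrix X) (hY : IsPartialPermMatrix Y) (hB : B.BlockTriangular id)
    (hdet : IsUnit B.det) (h : Bᵀ * X * B = Y) : X = Y :=
  eq_of_cornerSum_eq fun a b => by
    rw [hX.cornerSum_eq_rank, hY.cornerSum_eq_rank, ← h, rank_corner_conj hB hdet]

end PartialPerm

theorem stmt8 {n : ℕ} (π σ B : Matrix (Fin n) (Fin n) ℂ)
    (hπ : IsPartialInvolution π) (hσ : IsPartialInvolution σ)
    (hBu : IsUnit B.det) (hBt : ∀ i j : Fin n, j < i → B i j = 0)
    (h : Bᵀ * π * B = σ) :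
    π = σ :=
  hπ.1.eq_of_transpose_mul_mul_eq hσ.1 (fun _ _ hij => hBt _ _ hij) hBu h
end

section
/- Let σ ∈ S_n be an involution (σ² = id) and let π be its permutation matrix. Then 𝔇(π) = (exc(σ) + inv(σ))/2, where 𝔇(π) counts pairs (i,j) with 1 ≤ i ≤ j ≤ n such that r_{ij} = r_{i-1,j-1} (with r_{0,k} := 0), r being the rank-control matrix of π, exc(σ) = |{i : σ(i) > i}|, and inv(σ) = |{(i,j) : i < j, σ(i) > σ(j)}|. -/
open Matrix

/-- The upper-left `k × l` corner of a matrix (truncated at the matrix size). -/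
def cornerSub {F : Type*} {n m : ℕ} (X : Matrix (Fin n) (Fin m) F) (k l : ℕ) :
    Matrix (Fin (min k n)) (Fin (min l m)) F :=
  X.submatrix (Fin.castLE (min_le_right k n)) (Fin.castLE (min_le_right l m))

/-- The `(k, l)` entry of the rank-control matrix. -/
noncomputable def rcEntry {F : Type*} [Field F] {n m : ℕ}
    (X : Matrix (Fin n) (Fin m) F) (k l : ℕ) : ℕ :=
  (cornerSub X k l).rank

/-- The parameter `𝔇(X)`: the number of pairs `(i, j)` with `1 ≤ i ≤ j ≤ n` such
that `r i j = r (i-1) (j-1)` in the rank-control matrix of `X` (the convention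
`r 0 k = 0` holds automatically since an empty matrix has rank `0`). -/
noncomputable def Dpar {F : Type*} [Field F] {n : ℕ}
    (X : Matrix (Fin n) (Fin n) F) : ℕ :=
  (((Finset.Icc 1 n) ×ˢ (Finset.Icc 1 n)).filter
    (fun p => p.1 ≤ p.2 ∧ rcEntry X p.1 p.2 = rcEntry X (p.1 - 1) (p.2 - 1))).card

/-- The permutation matrix of `σ`: entry `(i, j)` is `1` iff `σ j = i`. -/
def permMatrix {n : ℕ} (σ : Equiv.Perm (Fin n)) : Matrix (Fin n) (Fin n) ℚ :=
  Matrix.of fun i j => if σ j = i then 1 else 0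

/-- The number of excedances of a permutation. -/
def excNum {n : ℕ} (σ : Equiv.Perm (Fin n)) : ℕ :=
  (Finset.univ.filter fun i : Fin n => i < σ i).card

/-- The number of inversions of a permutation. -/
def invNum {n : ℕ} (σ : Equiv.Perm (Fin n)) : ℕ :=
  (Finset.univ.filter fun p : Fin n × Fin n => p.1 < p.2 ∧ σ p.2 < σ p.1).card

lemma rc_perm {n : ℕ} (σ : Equiv.Perm (Fin n)) (k l : ℕ) :
    rcEntry (permMatrix σ) k l
      = (Finset.univ.filter fun j : Fin n => (j : ℕ) < l ∧ ((σ j : Fin n) : ℕ) < k).card := by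
  classical
  set M := cornerSub (permMatrix σ) k l with hM
  set s : Fin (min l n) → ℕ := fun j => ((σ (Fin.castLE (min_le_right l n) j) : Fin n) : ℕ) with hs
  have hd : Mᵀ * M = Matrix.diagonal (fun j : Fin (min l n) => if s j < k then (1 : ℚ) else 0) := by
    ext j j'
    have hterm : ∀ i : Fin (min k n), Mᵀ j i * M i j'
        = if ((i : ℕ) = s j ∧ (i : ℕ) = s j') then (1 : ℚ) else 0 := by
      intro i
      simp only [hM, Matrix.transpose_apply, cornerSub, Matrix.submatrix_apply, permMatrix,
        Matrix.of_apply]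
      have h1 : (σ (Fin.castLE (min_le_right l n) j) = Fin.castLE (min_le_right k n) i)
          ↔ (i : ℕ) = s j := by
        rw [Fin.ext_iff]; simp [hs]; omega
      have h2 : (σ (Fin.castLE (min_le_right l n) j') = Fin.castLE (min_le_right k n) i)
          ↔ (i : ℕ) = s j' := by
        rw [Fin.ext_iff]; simp [hs]; omega
      by_cases hA : (i : ℕ) = s j <;> by_cases hB : (i : ℕ) = s j' <;>
        simp [h1, h2, hA, hB]
    rw [Matrix.mul_apply]
    rw [Finset.sum_congr rfl (fun i _ => hterm i)]
    rcases eq_or_ne j j' with rfl | hne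
    · simp only [Matrix.diagonal_apply_eq, and_self]
      rw [Finset.sum_boole]
      by_cases hlt : s j < k
      · have hsn : s j < min k n := lt_min hlt (Fin.is_lt _)
        have : (Finset.univ.filter fun i : Fin (min k n) => (i : ℕ) = s j) = {⟨s j, hsn⟩} := by
          ext i; simp [Fin.ext_iff]
        simp [this, hlt]
      · have : (Finset.univ.filter fun i : Fin (min k n) => (i : ℕ) = s j) = ∅ := by
          ext i; simp; intro h; omega
        simp [this, hlt]
    · have hsne : s j ≠ s j' := by
        intro h
        apply hne
        have : σ (Fin.castLE (min_le_right l n) j) = σ (Fin.castLE (min_le_right l n) j') :=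
          Fin.ext h
        have := σ.injective this
        exact Fin.ext (by simpa [Fin.ext_iff] using this)
      rw [Matrix.diagonal_apply_ne _ hne]
      apply Finset.sum_eq_zero
      intro i _
      rw [if_neg]
      rintro ⟨h1, h2⟩; exact hsne (h1 ▸ h2)
  have hrank : M.rank = Fintype.card {j : Fin (min l n) // s j < k} := by
    rw [← Matrix.rank_transpose_mul_self, hd, Matrix.rank_diagonal]
    apply Fintype.card_congr
    apply Equiv.subtypeEquivRight
    intro j
    by_cases h : s j < k <;> simp [h]
  rw [rcEntry, ← hM, hrank, Fintype.card_subtype]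
  apply Finset.card_bij (fun j _ => Fin.castLE (min_le_right l n) j)
  · intro j hj
    simp only [Finset.mem_filter, Finset.mem_univ, true_and] at hj ⊢
    exact ⟨lt_of_lt_of_le (Fin.is_lt j) (by omega), hj⟩
  · intro a _ b _ h
    exact Fin.ext (by simpa [Fin.ext_iff] using h)
  · intro x hx
    simp only [Finset.mem_filter, Finset.mem_univ, true_and] at hx
    have hxm : (x : ℕ) < min l n := lt_min hx.1 (Fin.is_lt x)
    exact ⟨⟨(x : ℕ), hxm⟩, by simpa [hs] using hx.2, Fin.ext rfl⟩

lemma sq_apply {n : ℕ} (σ : Equiv.Perm (Fin n)) (hσ : σ * σ = 1) (x : Fin n) : σ (σ x) = x := by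
  have := Equiv.ext_iff.mp hσ x
  simpa using this

/-- Criterion for the rank-control equality. -/
lemma rc_crit {n : ℕ} (σ : Equiv.Perm (Fin n)) (hσ : σ * σ = 1) (a b : Fin n) :
    (rcEntry (permMatrix σ) ((a : ℕ) + 1) ((b : ℕ) + 1)
        = rcEntry (permMatrix σ) (a : ℕ) (b : ℕ))
      ↔ ((a : ℕ) < ((σ b : Fin n) : ℕ) ∧ (b : ℕ) ≤ ((σ a : Fin n) : ℕ)) := by
  classical
  rw [rc_perm, rc_perm]
  set S : Finset (Fin n) :=
    Finset.univ.filter fun j : Fin n => (j : ℕ) < (b : ℕ) + 1 ∧ ((σ j : Fin n) : ℕ) < (a : ℕ) + 1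
    with hS
  set S' : Finset (Fin n) :=
    Finset.univ.filter fun j : Fin n => (j : ℕ) < (b : ℕ) ∧ ((σ j : Fin n) : ℕ) < (a : ℕ)
    with hS'
  have hsub : S' ⊆ S := by
    intro x hx
    simp only [hS, hS', Finset.mem_filter, Finset.mem_univ, true_and] at hx ⊢
    omega
  constructor
  · intro hcard
    have heq : S' = S := Finset.eq_of_subset_of_card_le hsub (le_of_eq hcard)
    by_contra hC
    push_neg at hC
    rcases Nat.lt_or_ge (a : ℕ) ((σ b : Fin n) : ℕ) with h1 | h1
    · -- then ¬ b ≤ σ a, i.e. σ a < b; witness x = σ a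
      have h2 := hC h1
      have hx : σ a ∈ S := by
        simp only [hS, Finset.mem_filter, Finset.mem_univ, true_and, sq_apply σ hσ]
        omega
      rw [← heq] at hx
      simp only [hS', Finset.mem_filter, Finset.mem_univ, true_and, sq_apply σ hσ] at hx
      omega
    · -- σ b ≤ a; witness x = b
      have hx : b ∈ S := by
        simp only [hS, Finset.mem_filter, Finset.mem_univ, true_and]
        omega
      rw [← heq] at hx
      simp only [hS', Finset.mem_filter, Finset.mem_univ, true_and] at hx
      omega
  · rintro ⟨h1, h2⟩
    have hsub2 : S ⊆ S' := by
      intro x hx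
      simp only [hS, hS', Finset.mem_filter, Finset.mem_univ, true_and] at hx ⊢
      rcases hx with ⟨hxb, hxa⟩
      have hxb' : (x : ℕ) ≤ (b : ℕ) := by omega
      have hxa' : ((σ x : Fin n) : ℕ) ≤ (a : ℕ) := by omega
      constructor
      · rcases Nat.lt_or_ge (x : ℕ) (b : ℕ) with h | h
        · exact h
        · exfalso
          have : x = b := Fin.ext (by omega)
          subst this
          omega
      · rcases Nat.lt_or_ge ((σ x : Fin n) : ℕ) (a : ℕ) with h | h
        · exact h
        · exfalso
          have hxe : σ x = a := Fin.ext (by omega)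
          have hx2 : x = σ a := by rw [← hxe, sq_apply σ hσ]
          have hx3 : (x : ℕ) = (b : ℕ) := by rw [hx2]; omega
          have hxb2 : x = b := Fin.ext hx3
          have : σ b = a := by rw [← hxb2, hxe]
          have : ((σ b : Fin n) : ℕ) = (a : ℕ) := by rw [this]
          omega
    rw [Finset.Subset.antisymm hsub2 hsub]

lemma dpar_eq {n : ℕ} (σ : Equiv.Perm (Fin n)) (hσ : σ * σ = 1) :
    Dpar (permMatrix σ)
      = (Finset.univ.filter fun p : Fin n × Fin n =>
          p.1 ≤ p.2 ∧ (p.1 : ℕ) < ((σ p.2 : Fin n) : ℕ) ∧ (p.2 : ℕ) ≤ ((σ p.1 : Fin n) : ℕ)).card := by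
  classical
  rw [Dpar]
  apply Finset.card_bij
    (fun (p : ℕ × ℕ) (hp : p ∈ (((Finset.Icc 1 n) ×ˢ (Finset.Icc 1 n)).filter
      (fun p => p.1 ≤ p.2 ∧ rcEntry (permMatrix σ) p.1 p.2
        = rcEntry (permMatrix σ) (p.1 - 1) (p.2 - 1)))) =>
      ((⟨p.1 - 1, by
          simp only [Finset.mem_filter, Finset.mem_product, Finset.mem_Icc] at hp; omega⟩ : Fin n),
       (⟨p.2 - 1, by
          simp only [Finset.mem_filter, Finset.mem_product, Finset.mem_Icc] at hp; omega⟩ : Fin n)))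
  · intro p hp
    simp only [Finset.mem_filter, Finset.mem_product, Finset.mem_Icc] at hp
    obtain ⟨⟨⟨h11, h12⟩, h21, h22⟩, hle, hrc⟩ := hp
    set a : Fin n := ⟨p.1 - 1, by omega⟩
    set b : Fin n := ⟨p.2 - 1, by omega⟩
    have ha : (a : ℕ) + 1 = p.1 := by show p.1 - 1 + 1 = p.1; omega
    have hb : (b : ℕ) + 1 = p.2 := by show p.2 - 1 + 1 = p.2; omega
    have ha' : (a : ℕ) = p.1 - 1 := rfl
    have hb' : (b : ℕ) = p.2 - 1 := rfl
    have hcrit := (rc_crit σ hσ a b)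
    rw [ha, hb, ha', hb'] at hcrit
    simp only [Finset.mem_filter, Finset.mem_univ, true_and]
    refine ⟨?_, hcrit.mp hrc⟩
    simp only [Fin.le_def, a, b]; omega
  · intro p hp q hq h
    simp only [Prod.ext_iff, Fin.ext_iff] at h
    simp only [Finset.mem_filter, Finset.mem_product, Finset.mem_Icc] at hp hq
    have := h.1; have := h.2
    ext
    · omega
    · omega
  · intro q hq
    simp only [Finset.mem_filter, Finset.mem_univ, true_and] at hq
    obtain ⟨hle, h1, h2⟩ := hq
    refine ⟨((q.1 : ℕ) + 1, (q.2 : ℕ) + 1), ?_, ?_⟩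
    · simp only [Finset.mem_filter, Finset.mem_product, Finset.mem_Icc]
      have hcrit := (rc_crit σ hσ q.1 q.2)
      refine ⟨⟨⟨by omega, by omega⟩, by omega, by omega⟩,
        Nat.add_le_add_right (Fin.le_def.mp hle) 1, ?_⟩
      simpa using hcrit.mpr ⟨h1, h2⟩
    · simp [Fin.ext_iff]

lemma comb {n : ℕ} (σ : Equiv.Perm (Fin n)) (hσ : σ * σ = 1) :
    2 * (Finset.univ.filter fun p : Fin n × Fin n =>
          p.1 ≤ p.2 ∧ (p.1 : ℕ) < ((σ p.2 : Fin n) : ℕ) ∧ (p.2 : ℕ) ≤ ((σ p.1 : Fin n) : ℕ)).card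
      = excNum σ + invNum σ := by
  classical
  have hsq := sq_apply σ hσ
  set D := Finset.univ.filter fun p : Fin n × Fin n =>
    p.1 ≤ p.2 ∧ (p.1 : ℕ) < ((σ p.2 : Fin n) : ℕ) ∧ (p.2 : ℕ) ≤ ((σ p.1 : Fin n) : ℕ) with hD
  set S2 := Finset.univ.filter fun p : Fin n × Fin n =>
    p.1 < p.2 ∧ (p.1 : ℕ) < ((σ p.2 : Fin n) : ℕ) ∧ (p.2 : ℕ) ≤ ((σ p.1 : Fin n) : ℕ) with hS2
  set S1 := Finset.univ.filter fun p : Fin n × Fin n =>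
    p.1 < p.2 ∧ σ p.2 < σ p.1 ∧ (p.1 : ℕ) < ((σ p.2 : Fin n) : ℕ) with hS1
  set T := Finset.univ.filter fun p : Fin n × Fin n =>
    p.1 < p.2 ∧ σ p.2 < σ p.1 ∧ ((σ p.2 : Fin n) : ℕ) < (p.1 : ℕ) with hT
  set Fx := Finset.univ.filter fun p : Fin n × Fin n =>
    p.1 < p.2 ∧ σ p.2 < σ p.1 ∧ ((σ p.2 : Fin n) : ℕ) = (p.1 : ℕ) with hFx
  -- f1 : D.card = excNum σ + S2.card
  have f1 : D.card = excNum σ + S2.card := by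
    have hsplit := Finset.card_filter_add_card_filter_not
      (s := D) (p := fun p : Fin n × Fin n => p.1 = p.2)
    have hdiag : (D.filter fun p : Fin n × Fin n => p.1 = p.2).card = excNum σ := by
      apply Finset.card_bij (fun p _ => p.1)
      · intro p hp
        simp only [hD, Finset.mem_filter, Finset.mem_univ, true_and] at hp
        obtain ⟨⟨_, h1, _⟩, heq⟩ := hp
        simp only [excNum, Finset.mem_filter, Finset.mem_univ, true_and, Fin.lt_def]
        rw [heq] at h1 ⊢; exact h1
      · intro p hp q hq h
        simp only [hD, Finset.mem_filter] at hp hq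
        exact Prod.ext h (by rw [← hp.2, ← hq.2, h])
      · intro a ha
        simp only [excNum, Finset.mem_filter, Finset.mem_univ, true_and, Fin.lt_def] at ha
        exact ⟨(a, a), by
          simp only [hD, Finset.mem_filter, Finset.mem_univ, true_and]
          exact ⟨⟨le_refl a, ha, le_of_lt ha⟩, trivial⟩, rfl⟩
    have hndiag : (D.filter fun p : Fin n × Fin n => ¬ p.1 = p.2) = S2 := by
      ext p
      simp only [hD, hS2, Finset.mem_filter, Finset.mem_univ, true_and, Fin.lt_def, Fin.le_def,
        Fin.ext_iff]
      omega
    rw [hdiag, hndiag] at hsplit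
    omega
  -- f2 : S2.card = S1.card
  have f2 : S2.card = S1.card := by
    apply Finset.card_bij (fun p _ => (p.1, σ p.2))
    · intro p hp
      simp only [hS2, Finset.mem_filter, Finset.mem_univ, true_and, Fin.lt_def] at hp
      obtain ⟨h1, h2, h3⟩ := hp
      have hne : (p.2 : ℕ) ≠ ((σ p.1 : Fin n) : ℕ) := by
        intro h
        have : p.2 = σ p.1 := Fin.ext h
        have : σ p.2 = p.1 := by rw [this, hsq]
        omega
      simp only [hS1, Finset.mem_filter, Finset.mem_univ, true_and, Fin.lt_def, hsq]
      exact ⟨h2, by omega, h1⟩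
    · intro p hp q hq h
      simp only [Prod.ext_iff] at h
      exact Prod.ext h.1 (σ.injective h.2)
    · intro q hq
      simp only [hS1, Finset.mem_filter, Finset.mem_univ, true_and, Fin.lt_def] at hq
      obtain ⟨h1, h2, h3⟩ := hq
      refine ⟨(q.1, σ q.2), ?_, by simp [hsq]⟩
      simp only [hS2, Finset.mem_filter, Finset.mem_univ, true_and, Fin.lt_def, hsq]
      exact ⟨h3, h1, le_of_lt h2⟩
  -- f4 : T.card = S1.card
  have f4 : T.card = S1.card := by
    apply Finset.card_bij (fun p _ => (σ p.2, σ p.1))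
    · intro p hp
      simp only [hT, Finset.mem_filter, Finset.mem_univ, true_and, Fin.lt_def] at hp
      simp only [hS1, Finset.mem_filter, Finset.mem_univ, true_and, Fin.lt_def, hsq]
      exact ⟨hp.2.1, hp.1, hp.2.2⟩
    · intro p hp q hq h
      simp only [Prod.ext_iff] at h
      exact Prod.ext (σ.injective h.2) (σ.injective h.1)
    · intro q hq
      simp only [hS1, Finset.mem_filter, Finset.mem_univ, true_and, Fin.lt_def] at hq
      refine ⟨(σ q.2, σ q.1), ?_, by simp [hsq]⟩
      simp only [hT, Finset.mem_filter, Finset.mem_univ, true_and, Fin.lt_def, hsq]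
      exact ⟨hq.2.1, hq.1, hq.2.2⟩
  -- f5 : Fx.card = excNum σ
  have f5 : Fx.card = excNum σ := by
    apply Finset.card_bij (fun p _ => p.1)
    · intro p hp
      simp only [hFx, Finset.mem_filter, Finset.mem_univ, true_and, Fin.lt_def] at hp
      obtain ⟨h1, h2, h3⟩ := hp
      simp only [excNum, Finset.mem_filter, Finset.mem_univ, true_and, Fin.lt_def]
      have hfix : σ p.2 = p.1 := Fin.ext h3
      have : p.2 = σ p.1 := by rw [← hfix, hsq]
      rw [this] at h1; exact h1
    · intro p hp q hq h
      simp only [hFx, Finset.mem_filter, Finset.mem_univ, true_and] at hp hq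
      have hp2 : p.2 = σ p.1 := by
        rw [← Fin.ext (hp.2.2), hsq]
      have hq2 : q.2 = σ q.1 := by
        rw [← Fin.ext (hq.2.2), hsq]
      exact Prod.ext h (by rw [hp2, hq2, h])
    · intro a ha
      simp only [excNum, Finset.mem_filter, Finset.mem_univ, true_and, Fin.lt_def] at ha
      refine ⟨(a, σ a), ?_, rfl⟩
      simp only [hFx, Finset.mem_filter, Finset.mem_univ, true_and, Fin.lt_def, hsq]
      exact ⟨ha, ha, trivial⟩
  -- f3 : invNum σ = S1.card + T.card + Fx.card
  have f3 : invNum σ = S1.card + T.card + Fx.card := by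
    set I := Finset.univ.filter fun p : Fin n × Fin n => p.1 < p.2 ∧ σ p.2 < σ p.1 with hI
    have hsplit1 := Finset.card_filter_add_card_filter_not
      (s := I) (p := fun p : Fin n × Fin n => (p.1 : ℕ) < ((σ p.2 : Fin n) : ℕ))
    have h1 : (I.filter fun p : Fin n × Fin n => (p.1 : ℕ) < ((σ p.2 : Fin n) : ℕ)) = S1 := by
      ext p
      simp only [hI, hS1, Finset.mem_filter, Finset.mem_univ, true_and]
      tauto
    set X := I.filter (fun p : Fin n × Fin n => ¬ (p.1 : ℕ) < ((σ p.2 : Fin n) : ℕ)) with hX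
    have hsplit2 := Finset.card_filter_add_card_filter_not
      (s := X) (p := fun p : Fin n × Fin n => ((σ p.2 : Fin n) : ℕ) = (p.1 : ℕ))
    have h2 : (X.filter fun p : Fin n × Fin n => ((σ p.2 : Fin n) : ℕ) = (p.1 : ℕ)) = Fx := by
      ext p
      simp only [hX, hI, hFx, Finset.mem_filter, Finset.mem_univ, true_and]
      constructor
      · rintro ⟨⟨hi, _⟩, he⟩; exact ⟨hi.1, hi.2, he⟩
      · rintro ⟨ha, hb, hc⟩; exact ⟨⟨⟨ha, hb⟩, by omega⟩, hc⟩
    have h3 : (X.filter fun p : Fin n × Fin n => ¬ ((σ p.2 : Fin n) : ℕ) = (p.1 : ℕ)) = T := by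
      ext p
      simp only [hX, hI, hT, Finset.mem_filter, Finset.mem_univ, true_and]
      constructor
      · rintro ⟨⟨hi, hn⟩, he⟩; exact ⟨hi.1, hi.2, by omega⟩
      · rintro ⟨ha, hb, hc⟩; exact ⟨⟨⟨ha, hb⟩, by omega⟩, by omega⟩
    rw [h1] at hsplit1
    rw [h2, h3] at hsplit2
    simp only [invNum, ← hI]
    omega
  omega

theorem stmt13 {n : ℕ} (σ : Equiv.Perm (Fin n)) (hσ : σ * σ = 1) :
    Dpar (permMatrix σ) = (excNum σ + invNum σ) / 2 := by
  have h1 := dpar_eq σ hσ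
  have h2 := comb σ hσ
  omega
end

section
/- For an involution σ ∈ S_n, the sum exc(σ) + inv(σ) is even, where exc(σ) is the number of excedances and inv(σ) is the number of inversions of σ. -/
open Equiv Equiv.Perm Finset

lemma lemA {n : ℕ} (σ : Equiv.Perm (Fin n)) :
    Equiv.Perm.signAux σ = (-1 : ℤˣ) ^ invNum σ := by
  rw [Equiv.Perm.signAux, Finset.prod_ite, Finset.prod_const, Finset.prod_const, one_pow, mul_one]
  congr 1
  rw [invNum]
  apply Finset.card_nbij' (fun x => (x.2, x.1)) (fun p => ⟨p.2, p.1⟩)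
  · intro x hx
    simp only [mem_coe, mem_finPairsLT, mem_filter, mem_univ, true_and] at *
    obtain ⟨h1, h2⟩ := hx
    exact ⟨h1, lt_of_le_of_ne h2 (fun he => absurd (σ.injective he) (ne_of_gt h1))⟩
  · intro p hp
    simp only [mem_coe, mem_finPairsLT, mem_filter, mem_univ, true_and] at *
    exact ⟨hp.1, le_of_lt hp.2⟩
  · intro x _; rfl
  · intro p _; rfl
lemma lemB {n : ℕ} : ∀ (k : ℕ) (σ : Equiv.Perm (Fin n)), σ * σ = 1 → excNum σ = k →
    Equiv.Perm.signAux σ = (-1 : ℤˣ) ^ k := by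
  intro k
  induction k with
  | zero =>
    intro σ hσ h0
    have hfix : ∀ i, σ i = i := by
      intro i
      have h1 : ∀ j : Fin n, ¬ j < σ j := by
        intro j hj
        have hpos : 0 < excNum σ := by
          rw [excNum]; exact Finset.card_pos.2 ⟨j, by simp [hj]⟩
        omega
      have h2 := h1 i
      have h3 := h1 (σ i)
      have h4 : σ (σ i) = i := by
        have := congrArg (fun f => f i) hσ; simpa [Equiv.Perm.mul_apply] using this
      rw [h4] at h3
      exact le_antisymm (not_lt.1 h2) (not_lt.1 h3)
    have : σ = 1 := Equiv.ext fun i => hfix i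
    rw [this, Equiv.Perm.signAux_one, pow_zero]
  | succ k ih =>
    intro σ hσ hk
    have hne : (Finset.univ.filter fun i : Fin n => i < σ i).Nonempty := by
      rw [← Finset.card_pos]; rw [excNum] at hk; omega
    obtain ⟨i, hi⟩ := hne
    rw [Finset.mem_filter] at hi
    have hilt : i < σ i := hi.2
    have hne' : i ≠ σ i := ne_of_lt hilt
    have hσσ : ∀ j, σ (σ j) = j := fun j => by
      have := congrArg (fun f => f j) hσ; simpa [Equiv.Perm.mul_apply] using this
    set τ := Equiv.swap i (σ i) * σ with hτdef
    have hτapp : ∀ j, τ j = if j = i then i else if j = σ i then σ i else σ j := by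
      intro j
      by_cases h1 : j = i
      · simp [hτdef, h1, Equiv.Perm.mul_apply, Equiv.swap_apply_right]
      · by_cases h2 : j = σ i
        · simp [hτdef, h1, h2, Equiv.Perm.mul_apply, hσσ, Equiv.swap_apply_left, hne'.symm]
        · have hx : σ j ≠ i := fun he => h2 (by rw [← hσσ j, he])
          have hy : σ j ≠ σ i := fun he => h1 (σ.injective he)
          simp only [hτdef, Equiv.Perm.mul_apply, if_neg h1, if_neg h2]
          exact Equiv.swap_apply_of_ne_of_ne hx hy
    have hτinv : τ * τ = 1 := by
      ext j
      simp only [Equiv.Perm.mul_apply, Equiv.Perm.one_apply]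
      rw [hτapp, hτapp]
      by_cases h1 : j = i
      · simp [h1]
      · by_cases h2 : j = σ i
        · simp [h1, h2, hne'.symm]
        · have hx : σ j ≠ i := fun he => h2 (by rw [← hσσ j, he])
          have hy : σ j ≠ σ i := fun he => h1 (σ.injective he)
          simp [h1, h2, hx, hy, hσσ]
    have hτexc : excNum τ = k := by
      have hset : (Finset.univ.filter fun j : Fin n => j < τ j) =
          (Finset.univ.filter fun j : Fin n => j < σ j).erase i := by
        ext j
        simp only [Finset.mem_filter, Finset.mem_erase, Finset.mem_univ, true_and]
        rw [hτapp]
        by_cases h1 : j = i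
        · simp [h1]
        · by_cases h2 : j = σ i
          · subst h2
            simp [h1, hσσ, not_lt.2 (le_of_lt hilt)]
          · simp [h1, h2]
      have := hk
      rw [excNum] at this ⊢
      rw [hset, Finset.card_erase_of_mem (by simp [hilt]), this]
      omega
    have hsτ := ih τ hτinv hτexc
    have hστ : σ = Equiv.swap i (σ i) * τ := by
      rw [hτdef, ← mul_assoc, Equiv.swap_mul_self, one_mul]
    rw [hστ, Equiv.Perm.signAux_mul, Equiv.Perm.signAux_swap hne', hsτ, pow_succ, mul_comm]
theorem stmt14 {n : ℕ} (σ : Equiv.Perm (Fin n)) (hσ : σ * σ = 1) :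
    Even (excNum σ + invNum σ) := by
  have h1 : (-1 : ℤˣ) ^ (excNum σ + invNum σ) = 1 := by
    rw [pow_add, ← lemA, ← lemB (excNum σ) σ hσ rfl, ← Equiv.Perm.signAux_mul, hσ,
      Equiv.Perm.signAux_one]
  exact (neg_one_pow_eq_one_iff_even (by decide : (-1 : ℤˣ) ≠ 1)).1 h1
end

section
/- Let S be a complex symmetric n×n matrix and π a partial involution matrix. If S lies in the Zariski closure of the congruence B-orbit of π, then rank(S_{kℓ}) ≤ rank(π_{kℓ}) for all 1 ≤ k, ℓ ≤ n. -/
/-!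
The condition `rank (M_{kℓ}) ≤ r` says that all `(r+1)`-minors of the corner `M_{kℓ}` vanish,
so it cuts out a Zariski-closed set. It holds on the whole orbit of `π` with
`r = rank π_{kℓ}`: for upper-triangular `B`, the corner of `Bᵀ π B` is
`(B_{kk})ᵀ π_{kℓ} B_{ℓℓ}`. Hence it holds on the Zariski closure of the orbit.
-/

open Matrix Topology

/-- The Zariski topology on the space of `n × n` complex matrices. -/
def zariskiT (n : ℕ) : TopologicalSpace (Matrix (Fin n) (Fin n) ℂ) :=
  TopologicalSpace.generateFrom
    { U | ∃ p : MvPolynomial (Fin n × Fin n) ℂ,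
        U = { M | MvPolynomial.eval (fun ij => M ij.1 ij.2) p ≠ 0 } }

/-- The congruence B-orbit of `π`. -/
def congOrbit {n : ℕ} (π : Matrix (Fin n) (Fin n) ℂ) :
    Set (Matrix (Fin n) (Fin n) ℂ) :=
  { S | ∃ B : Matrix (Fin n) (Fin n) ℂ,
      IsUnit B.det ∧ (∀ i j : Fin n, j < i → B i j = 0) ∧ S = Bᵀ * π * B }

namespace Matrix

section Minors

variable {K m n : Type*} [Field K] [Fintype m] [Fintype n]

lemma exists_linearIndependent_rows_of_le_rank (A : Matrix m n K) {s : ℕ} (h : s ≤ A.rank) :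
    ∃ f : Fin s → m, LinearIndependent K (A.submatrix f id).row := by
  obtain ⟨κ, a, ha, hspan, hli⟩ := exists_linearIndependent' K A.row
  have : Fintype κ := Fintype.ofInjective a ha
  have hcard : A.rank = Fintype.card κ := by
    rw [rank_eq_finrank_span_row, ← hspan, finrank_span_eq_card hli]
  obtain ⟨e⟩ : Nonempty (Fin s ↪ κ) :=
    Function.Embedding.nonempty_of_card_le (by simpa [hcard] using h)
  exact ⟨a ∘ e, hli.comp e e.injective⟩

lemma exists_det_submatrix_ne_zero_of_le_rank (A : Matrix m n K) {s : ℕ} (h : s ≤ A.rank) :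
    ∃ (f : Fin s → m) (g : Fin s → n), (A.submatrix f g).det ≠ 0 := by
  obtain ⟨f, hf⟩ := A.exists_linearIndependent_rows_of_le_rank h
  have hrank : (A.submatrix f id).rank = s := by rw [hf.rank_matrix, Fintype.card_fin]
  obtain ⟨g, hg⟩ :=
    (A.submatrix f id)ᵀ.exists_linearIndependent_rows_of_le_rank (by rw [rank_transpose, hrank])
  have hunit : IsUnit ((A.submatrix f g)ᵀ) := linearIndependent_rows_iff_isUnit.mp hg
  rw [isUnit_iff_isUnit_det, det_transpose, isUnit_iff_ne_zero] at hunit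
  exact ⟨f, g, hunit⟩

theorem rank_le_iff_det_submatrix_eq_zero (A : Matrix m n K) (r : ℕ) :
    A.rank ≤ r ↔ ∀ (f : Fin (r + 1) → m) (g : Fin (r + 1) → n), (A.submatrix f g).det = 0 := by
  constructor
  · intro h f g
    by_contra hdet
    have := A.rank_submatrix_le f g
    rw [rank_of_det_ne_zero hdet, Fintype.card_fin] at this
    omega
  · intro h
    by_contra! hlt
    obtain ⟨f, g, hdet⟩ := A.exists_det_submatrix_ne_zero_of_le_rank hlt
    exact hdet (h f g)

end Minors

lemma eval_det_submatrix_mvPolynomialX {R m n s : Type*} [CommRing R] [Fintype s] [DecidableEq s]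
    (M : Matrix m n R) (f : s → m) (g : s → n) :
    MvPolynomial.eval (fun ij => M ij.1 ij.2) ((mvPolynomialX m n R).submatrix f g).det =
      (M.submatrix f g).det := by
  rw [RingHom.map_det, RingHom.mapMatrix_apply, ← submatrix_map]
  exact congrArg (fun X => (X.submatrix f g).det) (mvPolynomialX_map_eval₂ (RingHom.id R) M)

end Matrix

section Zariski

lemma isClosed_zariskiT_setOf_eval_eq_zero {n : ℕ} (p : MvPolynomial (Fin n × Fin n) ℂ) :
    IsClosed[zariskiT n] {M | MvPolynomial.eval (fun ij => M ij.1 ij.2) p = 0} :=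
  @IsClosed.mk _ (zariskiT n) _ (TopologicalSpace.isOpen_generateFrom_of_mem ⟨p, rfl⟩)

lemma isClosed_zariskiT_setOf_rank_submatrix_le {n : ℕ} {m₀ n₀ : Type*} [Fintype m₀]
    [Fintype n₀] (ρ : m₀ → Fin n) (γ : n₀ → Fin n) (r : ℕ) :
    IsClosed[zariskiT n] {M | (M.submatrix ρ γ).rank ≤ r} := by
  have hminors : {M : Matrix (Fin n) (Fin n) ℂ | (M.submatrix ρ γ).rank ≤ r} =
      ⋂ (f : Fin (r + 1) → m₀) (g : Fin (r + 1) → n₀), {M | MvPolynomial.eval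
        (fun ij => M ij.1 ij.2) ((mvPolynomialX _ _ ℂ).submatrix (ρ ∘ f) (γ ∘ g)).det = 0} := by
    ext M
    simp only [Set.mem_ofPred_eq, Set.mem_iInter, rank_le_iff_det_submatrix_eq_zero,
      eval_det_submatrix_mvPolynomialX, submatrix_submatrix]
  rw [hminors]
  exact @isClosed_iInter _ _ (zariskiT n) _ fun f => @isClosed_iInter _ _ (zariskiT n) _
    fun g => isClosed_zariskiT_setOf_eval_eq_zero _

end Zariski

section Corners

lemma cornerSub_transpose {R : Type*} {m n : ℕ} (X : Matrix (Fin m) (Fin n) R) (k l : ℕ) :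
    cornerSub Xᵀ l k = (cornerSub X k l)ᵀ :=
  rfl

lemma cornerSub_mul_of_isUpperTriangular {R : Type*} [NonUnitalNonAssocSemiring R] {m n : ℕ}
    (X : Matrix (Fin m) (Fin n) R) {B : Matrix (Fin n) (Fin n) R} (hB : B.IsUpperTriangular)
    (k l : ℕ) : cornerSub (X * B) k l = cornerSub X k l * cornerSub B l l := by
  ext i j
  simp only [cornerSub, submatrix_apply, mul_apply]
  refine (Fintype.sum_of_injective _ (Fin.castLE_injective (min_le_right l n)) _ _ ?_
    fun _ => rfl).symm
  intro x hx
  have hjx : Fin.castLE (min_le_right l n) j < x := by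
    rw [Fin.lt_def, Fin.val_castLE]
    by_contra! hxj
    exact hx ⟨⟨x, hxj.trans_lt j.isLt⟩, rfl⟩
  exact mul_eq_zero_of_right _ (hB hjx)

variable {K : Type*} [Field K]

lemma rank_cornerSub_mul_le {m n : ℕ} (X : Matrix (Fin m) (Fin n) K)
    {B : Matrix (Fin n) (Fin n) K} (hB : B.IsUpperTriangular) (k l : ℕ) :
    (cornerSub (X * B) k l).rank ≤ (cornerSub X k l).rank := by
  rw [cornerSub_mul_of_isUpperTriangular X hB]
  exact rank_mul_le_left _ _

lemma rank_cornerSub_transpose_mul_mul_le {n : ℕ} (P : Matrix (Fin n) (Fin n) K)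
    {B : Matrix (Fin n) (Fin n) K} (hB : B.IsUpperTriangular) (k l : ℕ) :
    (cornerSub (Bᵀ * P * B) k l).rank ≤ (cornerSub P k l).rank :=
  calc (cornerSub (Bᵀ * P * B) k l).rank
      ≤ (cornerSub (Bᵀ * P) k l).rank := rank_cornerSub_mul_le _ hB k l
    _ = (cornerSub (Pᵀ * B) l k).rank := by
      rw [← rank_transpose, ← cornerSub_transpose, transpose_mul, transpose_transpose]
    _ ≤ (cornerSub Pᵀ l k).rank := rank_cornerSub_mul_le _ hB l k
    _ = (cornerSub P k l).rank := by rw [cornerSub_transpose, rank_transpose]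

end Corners

lemma congOrbit_subset_setOf_rank_cornerSub_le {n : ℕ} (π : Matrix (Fin n) (Fin n) ℂ)
    (k l : ℕ) : congOrbit π ⊆ {S | (cornerSub S k l).rank ≤ (cornerSub π k l).rank} := by
  rintro _ ⟨B, -, hB, rfl⟩
  exact rank_cornerSub_transpose_mul_mul_le π (fun i j => hB i j) k l

theorem stmt18_general {n : ℕ} (S π : Matrix (Fin n) (Fin n) ℂ)
    (hcl : S ∈ @closure _ (zariskiT n) (congOrbit π)) :
    ∀ k l : ℕ, 1 ≤ k → k ≤ n → 1 ≤ l → l ≤ n →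
      rcEntry S k l ≤ rcEntry π k l := by
  intro k l _ _ _ _
  exact @closure_minimal _ (zariskiT n) _ _ (congOrbit_subset_setOf_rank_cornerSub_le π k l)
    (isClosed_zariskiT_setOf_rank_submatrix_le _ _ _) _ hcl

theorem stmt18 {n : ℕ} (S π : Matrix (Fin n) (Fin n) ℂ) (hS : S.IsSymm)
    (hperm : IsPartialPermMatrix π) (hsym : π.IsSymm)
    (hcl : S ∈ @closure _ (zariskiT n) (congOrbit π)) :
    ∀ k l : ℕ, 1 ≤ k → k ≤ n → 1 ≤ l → l ≤ n →
      rcEntry S k l ≤ rcEntry π k l :=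
  stmt18_general S π hcl
end
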